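/- Let s ∈ S and let ξ be a filter in the inverse semigroup with zero S such that s⋆ * s * t ∈ ξ for all t ∈ ξ. Then: (i) λ_s(ξ) is a filter; (ii) s * s⋆ * u ∈ λ_s(ξ) for every u ∈ λ_s(ξ); (iii) s * t ∈ λ_s(ξ) for every t ∈ ξ. -/
import Mathlib


/-- An inverse semigroup with zero: every element `s` has a unique generalized
inverse `star s`, and `0` is absorbing. -/
class InverseSemigroupWithZero (S : Type*) extends Semigroup S, Zero S, Star S where
  zero_mul : ∀ s : S, 0 * s = 0
  mul_zero : ∀ s : S, s * 0 = 0
  mul_star_mul_self : ∀ s : S, s * star s * s = s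
  star_mul_self_star : ∀ s : S, star s * s * star s = star s
  star_unique : ∀ s x : S, s * x * s = s → x * s * x = x → x = star s

variable {S : Type*} [InverseSemigroupWithZero S]

/-- The natural partial order on an inverse semigroup: `s ≤ t` iff `t * s⋆ * s = s`. -/
def natLe (s t : S) : Prop := t * star s * s = s

section AuxLemmas
open InverseSemigroupWithZero

open InverseSemigroupWithZero

lemma isws_sss (s : S) : s * star s * s = s := mul_star_mul_self s
lemma isws_ss_s (s : S) : star s * s * star s = star s := star_mul_self_star s

lemma isws_star_star (s : S) : star (star s) = s :=
  (star_unique (star s) s (isws_ss_s s) (isws_sss s)).symm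

lemma isws_star_idem {e : S} (he : e * e = e) : star e = e :=
  (star_unique e e (by rw [he, he]) (by rw [he, he])).symm

lemma isws_idem_ss (s : S) : (star s * s) * (star s * s) = star s * s := by
  calc (star s * s) * (star s * s) = star s * (s * star s * s) := by simp only [mul_assoc]
    _ = star s * s := by rw [isws_sss s]

lemma isws_idem_s_s (s : S) : (s * star s) * (s * star s) = s * star s := by
  calc (s * star s) * (s * star s) = s * (star s * s * star s) := by simp only [mul_assoc]
    _ = s * star s := by rw [isws_ss_s s]

lemma isws_idem_mul {e f : S} (he : e*e = e) (hf : f*f = f) : (e*f)*(e*f) = e*f := by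
  have hx : f * star (e*f) * e = star (e*f) := by
    refine star_unique _ _ ?_ ?_
    · calc (e*f) * (f * star (e*f) * e) * (e*f)
          = e*(f*f)*star (e*f)*(e*e)*f := by simp only [mul_assoc]
        _ = e*f*star (e*f)*(e*f) := by rw [he, hf]; simp only [mul_assoc]
        _ = e*f := isws_sss (e*f)
    · calc (f * star (e*f) * e) * (e*f) * (f * star (e*f) * e)
          = f*star (e*f)*(e*e)*(f*f)*star (e*f)*e := by simp only [mul_assoc]
        _ = f*(star (e*f)*(e*f)*star (e*f))*e := by rw [he, hf]; simp only [mul_assoc]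
        _ = f*star (e*f)*e := by rw [isws_ss_s (e*f)]
  have hxx : star (e*f) * star (e*f) = star (e*f) := by
    calc star (e*f) * star (e*f) = (f * star (e*f) * e) * (f * star (e*f) * e) := by rw [hx]
      _ = f*(star (e*f)*(e*f)*star (e*f))*e := by simp only [mul_assoc]
      _ = f*star (e*f)*e := by rw [isws_ss_s (e*f)]
      _ = star (e*f) := hx
  have ha : e*f = star (e*f) := by
    conv_lhs => rw [← isws_star_star (e*f)]
    rw [isws_star_idem hxx]
  rw [ha]; exact hxx

lemma isws_idem_comm {e f : S} (he : e*e = e) (hf : f*f = f) : e*f = f*e := by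
  have hef := isws_idem_mul he hf
  have hfe := isws_idem_mul hf he
  have : f*e = star (e*f) := by
    refine star_unique _ _ ?_ ?_
    · calc (e*f)*(f*e)*(e*f) = e*(f*f)*(e*e)*f := by simp only [mul_assoc]
        _ = e*f*(e*f) := by rw [he, hf]; simp only [mul_assoc]
        _ = e*f := hef
    · calc (f*e)*(e*f)*(f*e) = f*(e*e)*(f*f)*e := by simp only [mul_assoc]
        _ = f*e*(f*e) := by rw [he, hf]; simp only [mul_assoc]
        _ = f*e := hfe
  rw [this, isws_star_idem hef]

lemma isws_star_mul (s t : S) : star (s*t) = star t * star s := by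
  refine (star_unique _ _ ?_ ?_).symm
  · calc (s*t)*(star t*star s)*(s*t)
        = s*((t*star t)*(star s*s))*t := by simp only [mul_assoc]
      _ = s*((star s*s)*(t*star t))*t := by
          rw [isws_idem_comm (isws_idem_s_s t) (isws_idem_ss s)]
      _ = (s*star s*s)*(t*star t*t) := by simp only [mul_assoc]
      _ = s*t := by rw [isws_sss s, isws_sss t]
  · calc (star t*star s)*(s*t)*(star t*star s)
        = star t*((star s*s)*(t*star t))*star s := by simp only [mul_assoc]
      _ = star t*((t*star t)*(star s*s))*star s := by
          rw [isws_idem_comm (isws_idem_ss s) (isws_idem_s_s t)]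
      _ = (star t*t*star t)*(star s*s*star s) := by simp only [mul_assoc]
      _ = star t*star s := by rw [isws_ss_s s, isws_ss_s t]

lemma isws_le_mul_w {x y : S} (hxy : y * star x * x = x) (w : S) :
    y * (star x * w) = x * (star x * w) := by
  calc y * (star x * w) = y * ((star x * x * star x) * w) := by rw [isws_ss_s x]
    _ = y * star x * x * (star x * w) := by simp only [mul_assoc]
    _ = x * (star x * w) := by rw [hxy]

lemma natLe_refl (x : S) : natLe x x := isws_sss x

lemma natLe_trans_aux {x y z f : S} (hf : f*f = f)
    (hcomm : f*(star y*y) = (star y*y)*f) (hx : y*f = x)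
    (hz : z*star y*y = y) (hsx : star x = f*star y) : z*star x*x = x := by
  rw [hsx, ← hx]
  calc z*(f*star y)*(y*f) = z*(f*(star y*y))*f := by simp only [mul_assoc]
    _ = z*((star y*y)*f)*f := by rw [hcomm]
    _ = z*star y*y*(f*f) := by simp only [mul_assoc]
    _ = y*f := by rw [hf, hz]

lemma natLe_trans {x y z : S} (hxy : natLe x y) (hyz : natLe y z) : natLe x z := by
  have hx : y * (star x * x) = x := by rw [← mul_assoc]; exact hxy
  have hsx : star x = (star x * x) * star y := by
    conv_lhs => rw [← hx]
    rw [isws_star_mul, isws_star_idem (isws_idem_ss x)]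
  exact natLe_trans_aux (isws_idem_ss x)
    (isws_idem_comm (isws_idem_ss x) (isws_idem_ss y)) hx hyz hsx

lemma natLe_mul_left {x y : S} (z : S) (hxy : natLe x y) : natLe (z*x) (z*y) := by
  show (z*y)*star (z*x)*(z*x) = z*x
  rw [isws_star_mul z x]
  calc (z*y)*(star x*star z)*(z*x)
      = z*(y*(star x*(star z*(z*x)))) := by simp only [mul_assoc]
    _ = z*(x*(star x*(star z*(z*x)))) := by rw [isws_le_mul_w hxy]
    _ = (z*x)*star (z*x)*(z*x) := by rw [isws_star_mul z x]; simp only [mul_assoc]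
    _ = z*x := isws_sss (z*x)

end AuxLemmas

/-- A filter in the inverse semigroup `S` (w.r.t. the natural partial order). -/
def IsFilterS (ξ : Set S) : Prop :=
  ξ.Nonempty ∧ (0 : S) ∉ ξ ∧
    (∀ x ∈ ξ, ∀ y : S, natLe x y → y ∈ ξ) ∧
    ∀ x ∈ ξ, ∀ y ∈ ξ, ∃ z ∈ ξ, natLe z x ∧ natLe z y

/-- An ultrafilter: a filter maximal under inclusion. -/
def IsUltraS (ξ : Set S) : Prop :=
  IsFilterS ξ ∧ ∀ η : Set S, IsFilterS η → ξ ⊆ η → η = ξ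

/-- The set `Ω` of all ultrafilters in `S`. -/
def OmegaAll (S : Type*) [InverseSemigroupWithZero S] : Set (Set S) := {ξ | IsUltraS ξ}

/-- `Ω_e`: the set of ultrafilters `ξ` with `eξ ⊆ ξ`. -/
def OmegaE (e : S) : Set (Set S) := {ξ | IsUltraS ξ ∧ ∀ t ∈ ξ, e * t ∈ ξ}

/-- The map `λₛ` on filters. -/
def lambdaMap (s : S) (ξ : Set S) : Set S := {u | ∃ t ∈ ξ, natLe (s * t) u}

/-- `y` is dense in `x` (for idempotents `y ≤ x`): there is no nonzero idempotent
`z ≤ x` with `z * y = 0`. -/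
def DenseIn (y x : S) : Prop :=
  ∀ z : S, IsIdempotentElem z → z * x = z → z * y = 0 → z = 0

/-- `s` essentially coincides with `t`. -/
def EssEq (s t : S) : Prop :=
  star s * s = star t * t ∧
    ∀ f : S, IsIdempotentElem f → f ≠ 0 → f * (star s * s) = f →
      ∃ e : S, IsIdempotentElem e ∧ e ≠ 0 ∧ e * f = e ∧ s * e = t * e

theorem lambdaMap_isFilter (s : S) (ξ : Set S) (hξ : IsFilterS ξ)
    (h : ∀ t ∈ ξ, star s * s * t ∈ ξ) :
    IsFilterS (lambdaMap s ξ) ∧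
      (∀ u ∈ lambdaMap s ξ, s * star s * u ∈ lambdaMap s ξ) ∧
      ∀ t ∈ ξ, s * t ∈ lambdaMap s ξ := by

  have hiii : ∀ t ∈ ξ, s * t ∈ lambdaMap s ξ := fun t ht => ⟨t, ht, natLe_refl (s*t)⟩
  obtain ⟨⟨t0, ht0⟩, h0, hup, hdir⟩ := hξ
  refine ⟨⟨⟨s*t0, hiii t0 ht0⟩, ?_, ?_, ?_⟩, ?_, hiii⟩
  · rintro ⟨t, ht, hle⟩
    have hst0 : s * t = 0 := by
      rw [← hle]
      rw [InverseSemigroupWithZero.zero_mul, InverseSemigroupWithZero.zero_mul]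
    have : star s * s * t = 0 := by
      rw [mul_assoc, hst0, InverseSemigroupWithZero.mul_zero]
    have h2 := h t ht
    rw [this] at h2
    exact h0 h2
  · rintro x ⟨t, ht, hle⟩ y hxy
    exact ⟨t, ht, natLe_trans hle hxy⟩
  · rintro x ⟨t1, ht1, h1⟩ y ⟨t2, ht2, h2⟩
    obtain ⟨t, ht, hle1, hle2⟩ := hdir t1 ht1 t2 ht2
    exact ⟨s*t, hiii t ht, natLe_trans (natLe_mul_left s hle1) h1,
      natLe_trans (natLe_mul_left s hle2) h2⟩
  · rintro u ⟨t, ht, hle⟩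
    refine ⟨star s * s * t, h t ht, ?_⟩
    have hst : s * (star s * s * t) = s * t := by
      calc s * (star s * s * t) = s * star s * s * t := by simp only [mul_assoc]
        _ = s * t := by rw [isws_sss s]
    show (s * star s * u) * star (s * (star s * s * t)) * (s * (star s * s * t))
        = s * (star s * s * t)
    rw [hst]
    calc s * star s * u * star (s*t) * (s*t)
        = s * star s * (u * star (s*t) * (s*t)) := by simp only [mul_assoc]
      _ = s * star s * (s*t) := by rw [hle]
      _ = s * star s * s * t := by simp only [mul_assoc]
      _ = s * t := by rw [isws_sss s]
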